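/- For s ∈ ℂ with 0 < Re(s) < 1, the Fourier transform of x ↦ |x|^{s-1} is ξ ↦ γ(s)·|ξ|^{-s} in the sense of tempered distributions, where γ(s) = π^{-s/2}Γ(s/2) / (π^{-(1-s)/2}Γ((1-s)/2)). -/

import Mathlib

/-!
Gaussian subordination: for `0 < re a < 1/2`,
`|x| ^ (-2a) = π ^ a / Γ(a) * ∫₀^∞ t ^ (a - 1) * exp (-π t x²) dt`,
so `|x| ^ (s - 1)` (with `a = (1 - s) / 2`) is a superposition of Gaussians. Pairing with `𝓕 φ`,
swapping the integrals and moving the Fourier transform onto the Gaussians, which become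
`t ^ (-1/2) * exp (-π ξ² / t)`, leaves the same superposition in the inverted variable `1 / t`
with `a = s / 2`, i.e. a multiple of `|ξ| ^ (-s)`. Both exponents lie in `(0, 1/2)` exactly when
`0 < re s < 1`; this is what makes `|x| ^ (-2 re a)` locally integrable and Fubini applicable.
-/

open MeasureTheory Set Complex Real FourierTransform

lemma one_div_mul_sq_cpow (a : ℂ) {p : ℝ} (hp : 0 < p) (x : ℝ) :
    (1 / ((p * x ^ 2 : ℝ) : ℂ)) ^ a = (p : ℂ) ^ (-a) * ((|x| : ℝ) : ℂ) ^ (-2 * a) := by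
  have h : 1 / ((p * x ^ 2 : ℝ) : ℂ) = ((p ^ (-1 : ℝ) : ℝ) : ℂ) * ((|x| ^ (-2 : ℝ) : ℝ) : ℂ) := by
    rw [Real.rpow_neg_one, Real.rpow_neg (abs_nonneg x), Real.rpow_two, sq_abs]
    push_cast; ring
  rw [h, mul_cpow_ofReal_nonneg (by positivity) (by positivity), ← cpow_mul_ofReal_nonneg hp.le,
    ← cpow_mul_ofReal_nonneg (abs_nonneg x)]
  push_cast; ring_nf

lemma one_div_mul_sq_rpow (b : ℝ) {p : ℝ} (hp : 0 < p) (x : ℝ) :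
    (1 / (p * x ^ 2)) ^ b = p ^ (-b) * |x| ^ (-2 * b) := by
  rw [← sq_abs, one_div, Real.inv_rpow (by positivity), ← Real.rpow_neg (by positivity),
    Real.mul_rpow hp.le (by positivity), ← Real.rpow_natCast, ← Real.rpow_mul (abs_nonneg x)]
  ring_nf

lemma integral_cpow_mul_exp_neg_pi_mul_sq_Ioi {a : ℂ} (ha : 0 < a.re) {x : ℝ} (hx : x ≠ 0) :
    ∫ t in Ioi (0 : ℝ), (t : ℂ) ^ (a - 1) * cexp (-π * t * x ^ 2)
      = (π : ℂ) ^ (-a) * Complex.Gamma a * ((|x| : ℝ) : ℂ) ^ (-2 * a) := by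
  have h := integral_cpow_mul_exp_neg_mul_Ioi ha (r := π * x ^ 2) (by positivity)
  rw [one_div_mul_sq_cpow a pi_pos] at h
  rw [mul_right_comm, ← h]
  refine setIntegral_congr_fun measurableSet_Ioi fun t _ => ?_
  push_cast; ring_nf

lemma integral_rpow_mul_exp_neg_pi_mul_sq_Ioi {b : ℝ} (hb : 0 < b) {x : ℝ} (hx : x ≠ 0) :
    ∫ t in Ioi (0 : ℝ), t ^ (b - 1) * rexp (-π * t * x ^ 2)
      = π ^ (-b) * Real.Gamma b * |x| ^ (-2 * b) := by
  have h := Real.integral_rpow_mul_exp_neg_mul_Ioi hb (r := π * x ^ 2) (by positivity)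
  rw [one_div_mul_sq_rpow b pi_pos] at h
  rw [mul_right_comm, ← h]
  refine setIntegral_congr_fun measurableSet_Ioi fun t _ => ?_
  ring_nf

lemma integrable_abs_rpow_smul {E : Type*} [NormedAddCommGroup E] [NormedSpace ℝ E]
    {g : ℝ → E} {C : ℝ} (hg : Integrable g) (hC : ∀ x, ‖g x‖ ≤ C) {b : ℝ}
    (hb₀ : -1 < b) (hb₁ : b ≤ 0) :
    Integrable (fun x : ℝ => |x| ^ b • g x) := by
  have hmeas : AEStronglyMeasurable (fun x : ℝ => |x| ^ b • g x) :=
    (measurable_abs.pow_const b).aestronglyMeasurable.smul hg.aestronglyMeasurable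
  have hnorm (x : ℝ) : ‖|x| ^ b • g x‖ = |x| ^ b * ‖g x‖ := by
    rw [norm_smul, norm_of_nonneg (by positivity)]
  rw [← integrableOn_univ, ← union_compl_self (Metric.ball (0 : ℝ) 1)]
  refine IntegrableOn.union ?_ ?_
  · refine integrableOn_ball_of_norm_le_rpow (by simp) (C := C) (α := -b) (by simp; linarith) ?_
      hmeas
    refine ae_of_all _ fun x => ?_
    rw [hnorm, neg_neg, Real.norm_eq_abs, mul_comm]
    exact mul_le_mul_of_nonneg_right (hC x) (by positivity)
  · refine hg.norm.integrableOn.mono' hmeas.restrict ?_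
    refine (ae_restrict_iff' measurableSet_ball.compl).2 (ae_of_all _ fun x hx => ?_)
    have hx1 : 1 ≤ |x| := by simpa using hx
    rw [hnorm]
    exact mul_le_of_le_one_left (norm_nonneg _) (Real.rpow_le_one_of_one_le_of_nonpos hx1 hb₁)

lemma integrable_gaussian_subordination_kernel {a : ℂ} (ha₀ : 0 < a.re) (ha₁ : a.re < 1 / 2)
    {g : ℝ → ℂ} {C : ℝ} (hg : Integrable g) (hC : ∀ x, ‖g x‖ ≤ C) :
    Integrable (fun p : ℝ × ℝ => (p.2 : ℂ) ^ (a - 1) * cexp (-π * p.2 * p.1 ^ 2) * g p.1)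
      (volume.prod (volume.restrict (Ioi 0))) := by
  have hmeas : AEStronglyMeasurable
      (fun p : ℝ × ℝ => (p.2 : ℂ) ^ (a - 1) * cexp (-π * p.2 * p.1 ^ 2) * g p.1)
      (volume.prod (volume.restrict (Ioi 0))) :=
    (Measurable.aestronglyMeasurable (by fun_prop)).mul hg.aestronglyMeasurable.comp_fst
  refine (integrable_prod_iff hmeas).2 ⟨?_, ?_⟩
  · filter_upwards [volume.ae_ne 0] with x hx
    refine (Integrable.of_integral_ne_zero ?_).mul_const (g x)
    rw [integral_cpow_mul_exp_neg_pi_mul_sq_Ioi ha₀ hx]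
    have : ((|x| : ℝ) : ℂ) ≠ 0 := by simpa using hx
    simp [Complex.Gamma_ne_zero_of_re_pos ha₀, this, pi_ne_zero]
  · have hnorm (x : ℝ) : ∫ t in Ioi (0 : ℝ), ‖(t : ℂ) ^ (a - 1) * cexp (-π * t * x ^ 2) * g x‖
        = ∫ t in Ioi (0 : ℝ), t ^ (a.re - 1) * rexp (-π * t * x ^ 2) * ‖g x‖ := by
      refine setIntegral_congr_fun measurableSet_Ioi fun t (ht : 0 < t) => ?_
      rw [norm_mul, norm_mul, norm_cpow_eq_rpow_re_of_pos ht, Complex.norm_exp, sub_re, one_re,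
        show (-π * t * x ^ 2 : ℂ) = ((-π * t * x ^ 2 : ℝ) : ℂ) by push_cast; ring, ofReal_re]
    have hb : -1 < -2 * a.re := by linarith
    refine ((integrable_abs_rpow_smul hg.norm (C := C) (by simpa using hC) hb
      (by linarith)).const_mul (π ^ (-a.re) * Real.Gamma a.re)).congr ?_
    filter_upwards [volume.ae_ne 0] with x hx
    simp only [hnorm, integral_mul_const, integral_rpow_mul_exp_neg_pi_mul_sq_Ioi ha₀ hx,
      smul_eq_mul]
    ring

theorem integral_abs_cpow_mul_eq_integral_gaussian {a : ℂ} (ha₀ : 0 < a.re) (ha₁ : a.re < 1 / 2)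
    {g : ℝ → ℂ} {C : ℝ} (hg : Integrable g) (hC : ∀ x, ‖g x‖ ≤ C) :
    ∫ x, ((|x| : ℝ) : ℂ) ^ (-2 * a) * g x
      = (π : ℂ) ^ a / Complex.Gamma a
          * ∫ t in Ioi (0 : ℝ), (t : ℂ) ^ (a - 1) * ∫ x : ℝ, cexp (-π * t * x ^ 2) * g x := by
  have hΓ : Complex.Gamma a ≠ 0 := Complex.Gamma_ne_zero_of_re_pos ha₀
  have hπ : (π : ℂ) ^ a ≠ 0 := by simp [pi_ne_zero]
  have hpointwise : ∀ x : ℝ, x ≠ 0 → ((|x| : ℝ) : ℂ) ^ (-2 * a) * g x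
      = (π : ℂ) ^ a / Complex.Gamma a
          * ∫ t in Ioi (0 : ℝ), (t : ℂ) ^ (a - 1) * cexp (-π * t * x ^ 2) * g x := by
    intro x hx
    rw [integral_mul_const, integral_cpow_mul_exp_neg_pi_mul_sq_Ioi ha₀ hx, cpow_neg]
    field_simp
  calc ∫ x, ((|x| : ℝ) : ℂ) ^ (-2 * a) * g x
      = ∫ x : ℝ, (π : ℂ) ^ a / Complex.Gamma a
          * ∫ t in Ioi (0 : ℝ), (t : ℂ) ^ (a - 1) * cexp (-π * t * x ^ 2) * g x := by
        refine integral_congr_ae ?_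
        filter_upwards [volume.ae_ne 0] with x hx
        exact hpointwise x hx
    _ = (π : ℂ) ^ a / Complex.Gamma a
          * ∫ t in Ioi (0 : ℝ), ∫ x : ℝ, (t : ℂ) ^ (a - 1) * cexp (-π * t * x ^ 2) * g x := by
        rw [integral_const_mul,
          integral_integral_swap (integrable_gaussian_subordination_kernel ha₀ ha₁ hg hC)]
    _ = _ := by
        simp only [mul_assoc, integral_const_mul]

theorem integral_abs_cpow_mul_eq_integral_inv_gaussian {a : ℂ} (ha₀ : 0 < a.re)
    (ha₁ : a.re < 1 / 2) {g : ℝ → ℂ} {C : ℝ} (hg : Integrable g) (hC : ∀ x, ‖g x‖ ≤ C) :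
    ∫ x, ((|x| : ℝ) : ℂ) ^ (-2 * a) * g x
      = (π : ℂ) ^ a / Complex.Gamma a
          * ∫ t in Ioi (0 : ℝ), (t : ℂ) ^ (-a - 1) * ∫ x : ℝ, cexp (-π / t * x ^ 2) * g x := by
  rw [integral_abs_cpow_mul_eq_integral_gaussian ha₀ ha₁ hg hC,
    ← integral_comp_rpow_Ioi _ (show (-1 : ℝ) ≠ 0 by norm_num)]
  congr 1
  refine setIntegral_congr_fun measurableSet_Ioi fun t (ht : 0 < t) => ?_
  have hpow : (t : ℂ) ^ (-a - 1) = ((t ^ (-2 : ℝ) : ℝ) : ℂ) * ((t⁻¹ : ℝ) : ℂ) ^ (a - 1) := by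
    rw [ofReal_inv, inv_cpow _ _ (by simp [arg_ofReal_of_nonneg ht.le, pi_pos.ne]), ← cpow_neg,
      ofReal_cpow ht.le, ← cpow_add _ _ (ofReal_ne_zero.2 ht.ne')]
    push_cast
    ring_nf
  norm_num [Real.rpow_neg_one, hpow, div_eq_mul_inv, mul_assoc]

lemma integral_fourier_mul_eq_of_integrable {f g : ℝ → ℂ} (hf : Integrable f)
    (hg : Integrable g) :
    ∫ ξ, 𝓕 f ξ * g ξ = ∫ x, f x * 𝓕 g x := by
  have h := VectorFourier.integral_fourierIntegral_smul_eq_flip (L := innerₗ ℝ)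
    Real.continuous_fourierChar continuous_inner hf hg
  rwa [show (innerₗ ℝ).flip = innerₗ ℝ from
    LinearMap.ext fun x => LinearMap.ext fun y => real_inner_comm x y] at h

lemma integral_gaussian_mul_fourier {f : ℝ → ℂ} (hf : Integrable f) {t : ℝ} (ht : 0 < t) :
    ∫ x : ℝ, cexp (-π * t * x ^ 2) * 𝓕 f x
      = 1 / (t : ℂ) ^ (1 / 2 : ℂ) * ∫ ξ : ℝ, cexp (-π / t * ξ ^ 2) * f ξ := by
  have hre : 0 < (t : ℂ).re := by simpa using ht
  have hgauss : Integrable fun x : ℝ => cexp (-π * t * x ^ 2) := by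
    simpa [neg_mul, mul_assoc] using
      integrable_cexp_neg_mul_sq (b := π * t) (by simpa using mul_pos pi_pos ht)
  rw [← integral_fourier_mul_eq_of_integrable hgauss hf, fourier_gaussian_pi hre,
    ← integral_const_mul]
  simp only [mul_assoc]

theorem integral_abs_cpow_mul_fourier_eq_integral_inv_gaussian {a : ℂ} (ha₀ : 0 < a.re)
    (ha₁ : a.re < 1 / 2) (φ : SchwartzMap ℝ ℂ) :
    ∫ x : ℝ, ((|x| : ℝ) : ℂ) ^ (-2 * a) * 𝓕 (φ : ℝ → ℂ) x
      = (π : ℂ) ^ a / Complex.Gamma a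
          * ∫ t in Ioi (0 : ℝ), (t : ℂ) ^ (a - 3 / 2) * ∫ ξ : ℝ, cexp (-π / t * ξ ^ 2) * φ ξ := by
  rw [← SchwartzMap.fourier_coe, integral_abs_cpow_mul_eq_integral_gaussian ha₀ ha₁
    (𝓕 φ).integrable ((𝓕 φ).norm_le_seminorm ℝ)]
  congr 1
  refine setIntegral_congr_fun measurableSet_Ioi fun t (ht : 0 < t) => ?_
  rw [SchwartzMap.fourier_coe, integral_gaussian_mul_fourier φ.integrable ht, ← mul_assoc, one_div,
    ← cpow_neg, ← cpow_add _ _ (ofReal_ne_zero.2 ht.ne')]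
  ring_nf

theorem stmt2 (s : ℂ) (hs0 : 0 < s.re) (hs1 : s.re < 1) (φ : SchwartzMap ℝ ℂ) :
    ∫ x : ℝ, ((|x| : ℝ) : ℂ) ^ (s - 1) * (𝓕 (φ : ℝ → ℂ)) x
      = ((π : ℂ) ^ (-s / 2) * Complex.Gamma (s / 2) * (π : ℂ) ^ ((1 - s) / 2)
          / Complex.Gamma ((1 - s) / 2))
        * ∫ ξ : ℝ, ((|ξ| : ℝ) : ℂ) ^ (-s) * φ ξ := by
  have ha₀ : 0 < ((1 - s) / 2).re := by rw [div_ofNat_re, sub_re, one_re]; linarith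
  have ha₁ : ((1 - s) / 2).re < 1 / 2 := by rw [div_ofNat_re, sub_re, one_re]; linarith
  have hb₀ : 0 < (s / 2).re := by rw [div_ofNat_re]; linarith
  have hb₁ : (s / 2).re < 1 / 2 := by rw [div_ofNat_re]; linarith
  have hΓ : Complex.Gamma (s / 2) ≠ 0 := Complex.Gamma_ne_zero_of_re_pos hb₀
  have hπ : (π : ℂ) ^ (s / 2) ≠ 0 := by simp [pi_ne_zero]
  calc ∫ x : ℝ, ((|x| : ℝ) : ℂ) ^ (s - 1) * 𝓕 (φ : ℝ → ℂ) x
      = ∫ x : ℝ, ((|x| : ℝ) : ℂ) ^ (-2 * ((1 - s) / 2)) * 𝓕 (φ : ℝ → ℂ) x := by ring_nf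
    _ = (π : ℂ) ^ ((1 - s) / 2) / Complex.Gamma ((1 - s) / 2)
          * ∫ t in Ioi (0 : ℝ), (t : ℂ) ^ (-(s / 2) - 1)
              * ∫ ξ : ℝ, cexp (-π / t * ξ ^ 2) * φ ξ := by
        rw [integral_abs_cpow_mul_fourier_eq_integral_inv_gaussian ha₀ ha₁,
          show (1 - s) / 2 - 3 / 2 = -(s / 2) - 1 by ring]
    _ = (π : ℂ) ^ ((1 - s) / 2) / Complex.Gamma ((1 - s) / 2)
          * (Complex.Gamma (s / 2) / (π : ℂ) ^ (s / 2)
              * ∫ ξ : ℝ, ((|ξ| : ℝ) : ℂ) ^ (-2 * (s / 2)) * φ ξ) := by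
        rw [integral_abs_cpow_mul_eq_integral_inv_gaussian hb₀ hb₁ φ.integrable
          (φ.norm_le_seminorm ℝ)]
        field_simp
    _ = _ := by
        rw [neg_div, cpow_neg, show -2 * (s / 2) = -s by ring]
        ring
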